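/- Let (X, Y) be supplementary difference sets over Z_v with parameters (v; r, s; λ) such that v = 2(r + s − λ) + 1, and let A and B be the ±1 sequences of length v associated to X and Y. Then PAF_A(c) + PAF_B(c) = 2 for every c with 1 ≤ c ≤ v − 1. -/
import Mathlib


open Finset

/-- The number of ordered pairs `(a, b)` with `a, b ∈ X` and `a − b = c` in `ZMod v`. -/
def diffCount (v : ℕ) (X : Finset (ZMod v)) (c : ZMod v) : ℕ :=
  ((X ×ˢ X).filter (fun p => p.1 - p.2 = c)).card

/-- The ±1 sequence associated to `X ⊆ ZMod v`: the value at index `k` is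
`−1` if `k mod v ∈ X` and `+1` otherwise. -/
def pmOneSeq (v : ℕ) (X : Finset (ZMod v)) (k : ℕ) : ℤ :=
  if (k : ZMod v) ∈ X then -1 else 1

/-- Periodic autocorrelation function of an integer sequence of length `v`:
`PAF_A(s) = ∑_{k<v} a_{(k+s) mod v} · a_k`. -/
def paf (v : ℕ) (a : ℕ → ℤ) (s : ℕ) : ℤ :=
  ∑ k ∈ Finset.range v, a ((k + s) % v) * a k

theorem paf_sum_eq_two (v : ℕ) (r s lam : ℕ)
    (X Y : Finset (ZMod v))
    (hX : X.card = r) (hY : Y.card = s)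
    (hsds : ∀ c : ZMod v, c ≠ 0 → diffCount v X c + diffCount v Y c = lam)
    (hv : v + 2 * lam = 2 * (r + s) + 1) :
    ∀ c : ℕ, 1 ≤ c → c ≤ v - 1 →
      paf v (pmOneSeq v X) c + paf v (pmOneSeq v Y) c = 2 := by
  intro c hc1 hc2
  have hvne : v ≠ 0 := by omega
  haveI : NeZero v := ⟨hvne⟩
  have hclt : c < v := by omega
  have hcz : (c : ZMod v) ≠ 0 := by
    intro h
    have hd : v ∣ c := (ZMod.natCast_eq_zero_iff c v).mp h
    have := Nat.le_of_dvd (by omega) hd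
    omega
  -- transfer sums over `range v` to sums over `ZMod v`
  have hsum : ∀ f : ZMod v → ℤ,
      ∑ k ∈ Finset.range v, f (k : ZMod v) = ∑ x : ZMod v, f x := by
    intro f
    refine Finset.sum_nbij' (fun k => (k : ZMod v)) (fun x => x.val) ?_ ?_ ?_ ?_ ?_
    · intro a _; exact Finset.mem_univ _
    · intro b _; exact Finset.mem_range.mpr (ZMod.val_lt b)
    · intro a ha; exact ZMod.val_natCast_of_lt (Finset.mem_range.mp ha)
    · intro b _; exact ZMod.natCast_rightInverse b
    · intro a _; rfl
  have key : ∀ Z : Finset (ZMod v),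
      paf v (pmOneSeq v Z) c
        = (v : ℤ) - 4 * Z.card + 4 * diffCount v Z (c : ZMod v) := by
    intro Z
    have hterm : ∀ k ∈ Finset.range v,
        pmOneSeq v Z ((k + c) % v) * pmOneSeq v Z k
          = (fun x : ZMod v => (if x + (c : ZMod v) ∈ Z then (-1 : ℤ) else 1) *
              (if x ∈ Z then (-1 : ℤ) else 1)) (k : ZMod v) := by
      intro k _
      simp only [pmOneSeq]
      have : (((k + c) % v : ℕ) : ZMod v) = (k : ZMod v) + (c : ZMod v) := by
        rw [ZMod.natCast_mod]; exact Nat.cast_add k c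
      rw [this]
    rw [paf, Finset.sum_congr rfl hterm,
      hsum (fun x : ZMod v => (if x + (c : ZMod v) ∈ Z then (-1 : ℤ) else 1) *
        (if x ∈ Z then (-1 : ℤ) else 1))]
    have hg : ∀ x : ZMod v,
        (if x + (c : ZMod v) ∈ Z then (-1 : ℤ) else 1) * (if x ∈ Z then (-1 : ℤ) else 1)
          = 1 - 2 * (if x + (c : ZMod v) ∈ Z then (1 : ℤ) else 0)
            - 2 * (if x ∈ Z then (1 : ℤ) else 0)
            + 4 * (if x + (c : ZMod v) ∈ Z ∧ x ∈ Z then (1 : ℤ) else 0) := by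
      intro x
      by_cases h1 : x + (c : ZMod v) ∈ Z <;> by_cases h2 : x ∈ Z <;>
        simp [h1, h2]
    rw [Finset.sum_congr rfl (fun x _ => hg x)]
    have h1 : ∑ x : ZMod v, (1 : ℤ) = (v : ℤ) := by
      simp [ZMod.card]
    have h2 : ∑ x : ZMod v, (if x ∈ Z then (1 : ℤ) else 0) = (Z.card : ℤ) := by
      simp [Finset.sum_ite_mem]
    have h3 : ∑ x : ZMod v, (if x + (c : ZMod v) ∈ Z then (1 : ℤ) else 0) = (Z.card : ℤ) := by
      rw [← h2]
      exact Fintype.sum_equiv (Equiv.addRight (c : ZMod v)) _ _ (fun x => rfl)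
    have h4 : ∑ x : ZMod v, (if x + (c : ZMod v) ∈ Z ∧ x ∈ Z then (1 : ℤ) else 0)
        = (diffCount v Z (c : ZMod v) : ℤ) := by
      rw [Finset.sum_boole]
      norm_cast
      apply Finset.card_bij' (fun x _ => ((x + (c : ZMod v), x) : ZMod v × ZMod v))
        (fun p _ => p.2)
      · intro x hx
        simp only [Finset.mem_filter, Finset.mem_univ, true_and] at hx
        simp [Finset.mem_filter, Finset.mem_product, hx.1, hx.2]
      · intro p hp
        simp only [Finset.mem_filter, Finset.mem_product] at hp
        have heq : p.1 = p.2 + (c : ZMod v) := by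
          have h := hp.2
          have := sub_eq_iff_eq_add.mp h
          rw [this]; ring
        simp only [Finset.mem_filter, Finset.mem_univ, true_and]
        exact ⟨by rw [← heq]; exact hp.1.1, hp.1.2⟩
      · intro x _; rfl
      · intro p hp
        simp only [Finset.mem_filter, Finset.mem_product] at hp
        have h : p.1 - p.2 = (c : ZMod v) := hp.2
        have : p.2 + (c : ZMod v) = p.1 := by rw [← h]; ring
        simp [this]
    rw [Finset.sum_add_distrib, Finset.sum_sub_distrib, Finset.sum_sub_distrib,
      ← Finset.mul_sum, ← Finset.mul_sum, ← Finset.mul_sum, h1, h2, h3, h4]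
    ring
  have hlam := hsds (c : ZMod v) hcz
  rw [key X, key Y, hX, hY]
  have : diffCount v X (c : ZMod v) + diffCount v Y (c : ZMod v) = lam := hlam
  omega
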